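/- Let k ≤ (n-3)/2. During a k-mutation, if k < (n-3)/2 then the number of k-edges of S decreases by exactly one and the number of (k+1)-edges increases by exactly one, while the number of j-edges for all other j is unchanged; if k = (n-3)/2 then the number of j-edges is unchanged for every j. -/

import Mathlib

open Finset
open scoped Classical

abbrev Pt : Type := ℝ × ℝ

/-- Twice the signed area of the triangle `a b c`; its sign is the orientation. -/
noncomputable def det3 (a b c : Pt) : ℝ :=
  (b.1 - a.1) * (c.2 - a.2) - (b.2 - a.2) * (c.1 - a.1)

/-- `S` is in general position: no three of its points are collinear. -/
def GenPos (S : Finset Pt) : Prop :=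
  ∀ a ∈ S, ∀ b ∈ S, ∀ c ∈ S, a ≠ b → a ≠ c → b ≠ c → det3 a b c ≠ 0

/-- A finite point set is in convex position. -/
def ConvexPos (Q : Finset Pt) : Prop :=
  ∀ x ∈ Q, x ∉ convexHull ℝ (↑(Q.erase x) : Set Pt)

/-- `crN S` : the number of 4-element subsets of `S` in convex position. -/
noncomputable def crN (S : Finset Pt) : ℕ :=
  ((S.powersetCard 4).filter ConvexPos).card

/-- Number of points of `S` strictly to the left of the directed line `p → q`. -/
noncomputable def sideCount (S : Finset Pt) (p q : Pt) : ℕ :=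
  (S.filter (fun x => 0 < det3 p q x)).card

/-- `{p, q}` is a `j`-edge of `S`: exactly `j` points of `S` lie in one of the open
half-planes bounded by the line through `p` and `q`. -/
def IsJEdge (S : Finset Pt) (j : ℕ) (p q : Pt) : Prop :=
  p ∈ S ∧ q ∈ S ∧ p ≠ q ∧ (sideCount S p q = j ∨ sideCount S q p = j)

/-- `ej S j` : the number of (unordered) `j`-edges of `S`. -/
noncomputable def ej (S : Finset Pt) (j : ℕ) : ℕ :=
  ((S.powersetCard 2).filter (fun e => ∃ p q : Pt, e = {p, q} ∧ IsJEdge S j p q)).card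

/-- `Ek S k` : the number of `(≤ k)`-edges of `S`. -/
noncomputable def Ek (S : Finset Pt) (k : ℕ) : ℕ :=
  ((S.powersetCard 2).filter
    (fun e => ∃ p q : Pt, e = {p, q} ∧ ∃ j ≤ k, IsJEdge S j p q)).card

/-- The vertices of the convex hull of `S` (its extreme points). -/
noncomputable def hullVertices (S : Finset Pt) : Finset Pt :=
  S.filter (fun x => x ∉ convexHull ℝ (↑(S.erase x) : Set Pt))

/-- Orientation of the labelled triple `a b c` of the configuration `P`. -/
noncomputable def detI {n : ℕ} (P : Fin n → Pt) (a b c : Fin n) : ℝ :=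
  det3 (P a) (P b) (P c)

/-- A labelled configuration is in general position. -/
def GenPosI {n : ℕ} (P : Fin n → Pt) : Prop :=
  ∀ a b c : Fin n, a ≠ b → a ≠ c → b ≠ c → detI P a b c ≠ 0

/-- Number of 4-element subsets of the labelled configuration in convex position. -/
noncomputable def crI {n : ℕ} (P : Fin n → Pt) : ℕ :=
  (((univ : Finset (Fin n)).powersetCard 4).filter (fun Q => ConvexPos (Q.image P))).card

/-- Number of points of the configuration strictly to the left of the directed line
`P a → P b`. -/
noncomputable def sideCountI {n : ℕ} (P : Fin n → Pt) (a b : Fin n) : ℕ :=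
  ((univ : Finset (Fin n)).filter (fun l => 0 < det3 (P a) (P b) (P l))).card

/-- Number of (unordered, labelled) `m`-edges of the configuration `P`. -/
noncomputable def ejI {n : ℕ} (P : Fin n → Pt) (m : ℕ) : ℕ :=
  (((univ : Finset (Fin n)).powersetCard 2).filter
    (fun e => ∃ a b : Fin n, e = {a, b} ∧ a ≠ b ∧
      (sideCountI P a b = m ∨ sideCountI P b a = m))).card


/-! ### Auxiliary lemmas -/

lemma det3_cyc (a b c : Pt) : det3 b c a = det3 a b c := by simp only [det3]; ring
lemma det3_swap (a b c : Pt) : det3 a c b = -det3 a b c := by simp only [det3]; ring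
lemma det3_swap1 (a b c : Pt) : det3 b a c = -det3 a b c := by simp only [det3]; ring
lemma det3_self1 (a b : Pt) : det3 a b a = 0 := by simp only [det3]; ring
lemma det3_self2 (a b : Pt) : det3 a b b = 0 := by simp only [det3]; ring
lemma det3_self0 (a b : Pt) : det3 a a b = 0 := by simp only [det3]; ring
lemma det3_affine (a b c d : Pt) (u : ℝ) :
    det3 a ((1-u) • b + u • c) d = (1-u) * det3 a b d + u * det3 a c d := by
  simp only [det3, Prod.fst_add, Prod.snd_add, Prod.smul_fst, Prod.smul_snd, smul_eq_mul]
  ring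

lemma sgn_trans {x y z : ℝ} (h1 : 0 < x*y) (h2 : 0 < x*z) : 0 < y*z := by
  have hx : x ≠ 0 := by rintro rfl; simp at h1
  have h : y*z = (x*y)*(x*z)/(x^2) := by field_simp
  rw [h]; positivity

lemma pos_iff_of_mul_pos {p q : ℝ} (h : 0 < p*q) : (0 < p ↔ 0 < q) := by
  constructor <;> intro h' <;> nlinarith

lemma count_aux {n : ℕ} (p : Fin n → Prop) (s : Finset (Fin n)) (z : Fin n)
    (hz : z ∉ s) (hmem : ∀ l, l ≠ z → (p l ↔ l ∈ s)) :
    ((univ : Finset (Fin n)).filter p).card = s.card + (if p z then 1 else 0) := by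
  by_cases hpz : p z
  · have h1 : (univ : Finset (Fin n)).filter p = insert z s := by
      ext l
      simp only [mem_filter, mem_univ, true_and, mem_insert]
      rcases eq_or_ne l z with rfl|hlz
      · simp [hpz]
      · simp [hlz, hmem l hlz]
    rw [h1, card_insert_of_notMem hz, if_pos hpz]
  · have h1 : (univ : Finset (Fin n)).filter p = s := by
      ext l
      simp only [mem_filter, mem_univ, true_and]
      rcases eq_or_ne l z with rfl|hlz
      · simp only [hpz, false_iff]; exact hz
      · exact hmem l hlz
    rw [h1, if_neg hpz]; ring

lemma pred_pair_iff {n : ℕ} (Q : Fin n → Pt) (m : ℕ) (x y : Fin n) (hxy : x ≠ y) :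
    (∃ a b : Fin n, ({x,y} : Finset (Fin n)) = {a,b} ∧ a ≠ b ∧
      (sideCountI Q a b = m ∨ sideCountI Q b a = m))
    ↔ (sideCountI Q x y = m ∨ sideCountI Q y x = m) := by
  constructor
  · rintro ⟨a, b, hab, hne, h⟩
    have hx : x = a ∨ x = b := by
      have hx' : x ∈ ({a,b} : Finset (Fin n)) := hab ▸ (by simp)
      simpa using hx'
    have hy : y = a ∨ y = b := by
      have hy' : y ∈ ({a,b} : Finset (Fin n)) := hab ▸ (by simp)
      simpa using hy'
    rcases hx with rfl|rfl <;> rcases hy with rfl|rfl <;> tauto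
  · intro h; exact ⟨x, y, rfl, hxy, h⟩

lemma neg_iff_of_mul_pos {p q : ℝ} (h : 0 < p*q) : (p < 0 ↔ q < 0) := by
  constructor <;> intro h' <;> nlinarith

lemma pairvals {x y n k m : ℕ} (hn3 : 3 ≤ n) (hxy : x + y = n - 3) (hk : k = x) :
    (((x + 1 = m) ∨ (y + 0 = m)) ↔ (m = k + 1 ∨ m = n - 3 - k)) ∧
    (((y + 0 = m) ∨ (x + 1 = m)) ↔ (m = k + 1 ∨ m = n - 3 - k)) ∧
    (((y + 1 = m) ∨ (x + 0 = m)) ↔ (m = k ∨ m = n - 2 - k)) ∧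
    (((x + 0 = m) ∨ (y + 1 = m)) ↔ (m = k ∨ m = n - 2 - k)) := by
  refine ⟨?_, ?_, ?_, ?_⟩ <;> omega

lemma ite_arith1 (A B : Prop) [Decidable A] [Decidable B] :
    (if A then (1:ℕ) else 0) + ((if A then 1 else 0) + (if B then 1 else 0))
      = (if A then 2 else 0) + (if B then 1 else 0) := by split_ifs <;> rfl

lemma ite_arith2 (A B : Prop) [Decidable A] [Decidable B] :
    (if B then (1:ℕ) else 0) + ((if B then 1 else 0) + (if A then 1 else 0))
      = (if A then 1 else 0) + (if B then 2 else 0) := by split_ifs <;> simp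

lemma final_arith (n k : ℕ) (eP eP' : ℕ → ℕ) (hn3 : 3 ≤ n) (hkle : 2*k ≤ n-3)
    (keyq : ∀ m : ℕ, eP m + ((if m = k ∨ m = n - 2 - k then 1 else 0)
        + (if m = k + 1 ∨ m = n - 3 - k then 2 else 0))
      = eP' m + ((if m = k ∨ m = n - 2 - k then 2 else 0)
        + (if m = k + 1 ∨ m = n - 3 - k then 1 else 0))) :
    (2 * k < n - 3 → eP k = eP' k + 1 ∧ eP' (k+1) = eP (k+1) + 1 ∧
      ∀ m : ℕ, 2 * m ≤ n - 2 → m ≠ k → m ≠ k + 1 → eP' m = eP m) ∧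
    (2 * k = n - 3 → ∀ m : ℕ, 2 * m ≤ n - 2 → eP' m = eP m) := by
  constructor
  · intro hlt
    refine ⟨?_, ?_, ?_⟩
    · have h1 := keyq k; split_ifs at h1 <;> omega
    · have h1 := keyq (k+1); split_ifs at h1 <;> omega
    · intro m hm hmk hmk1; have h1 := keyq m; split_ifs at h1 <;> omega
  · intro heq m hm
    have h1 := keyq m; split_ifs at h1 <;> omega
set_option maxHeartbeats 2000000 in
/-- during a `k`-mutation with `k ≤ (n-3)/2`, if `k < (n-3)/2` the
number of `k`-edges decreases by exactly one, the number of `(k+1)`-edges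
increases by exactly one, and the number of `j`-edges (`0 ≤ j ≤ ⌊(n-2)/2⌋`) is
otherwise unchanged; if `k = (n-3)/2` all the numbers of `j`-edges are unchanged. -/
theorem statement4 (n : ℕ) (P P' : Fin n → Pt) (i₁ i₂ i₃ : Fin n)
    (h12 : i₁ ≠ i₂) (h13 : i₁ ≠ i₃) (h23 : i₂ ≠ i₃)
    (hfix : ∀ i, i ≠ i₁ → P' i = P i)
    (hgp : GenPosI P) (hgp' : GenPosI P')
    (hflip : detI P i₁ i₂ i₃ * detI P' i₁ i₂ i₃ < 0)
    (hothers : ∀ j₁ j₂ j₃ : Fin n, j₁ ≠ j₂ → j₁ ≠ j₃ → j₂ ≠ j₃ →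
      ({j₁, j₂, j₃} : Finset (Fin n)) ≠ {i₁, i₂, i₃} →
      0 < detI P j₁ j₂ j₃ * detI P' j₁ j₂ j₃)
    (hseg : ∃ t ∈ Set.Ioo (0:ℝ) 1, ∃ u ∈ Set.Ioo (0:ℝ) 1,
      (1 - t) • P i₁ + t • P' i₁ = (1 - u) • P i₂ + u • P i₃)
    (k : ℕ)
    (hk : k = ((univ : Finset (Fin n)).filter (fun j => j ≠ i₁ ∧ j ≠ i₂ ∧ j ≠ i₃ ∧
      0 < det3 (P i₂) (P i₃) (P j) * det3 (P i₂) (P i₃) (P i₁))).card)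
    (hkle : 2 * k ≤ n - 3) :
    (2 * k < n - 3 →
      ejI P k = ejI P' k + 1 ∧
      ejI P' (k + 1) = ejI P (k + 1) + 1 ∧
      ∀ m : ℕ, 2 * m ≤ n - 2 → m ≠ k → m ≠ k + 1 → ejI P' m = ejI P m) ∧
    (2 * k = n - 3 → ∀ m : ℕ, 2 * m ≤ n - 2 → ejI P' m = ejI P m) := by
  classical
  obtain ⟨t, ht, u, hu, hX⟩ := hseg
  have hB' : P' i₂ = P i₂ := hfix _ (Ne.symm h12)
  have hC' : P' i₃ = P i₃ := hfix _ (Ne.symm h13)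
  -- n ≥ 3
  have hn3 : 3 ≤ n := by
    have h1 : ({i₁, i₂, i₃} : Finset (Fin n)).card = 3 := by
      rw [card_insert_of_notMem (by simp [h12, h13]),
        card_insert_of_notMem (by simp [h23]), card_singleton]
    calc 3 = ({i₁, i₂, i₃} : Finset (Fin n)).card := h1.symm
    _ ≤ (univ : Finset (Fin n)).card := card_le_card (subset_univ _)
    _ = n := by simp
  -- the two key signed areas
  have hs : det3 (P i₂) (P i₃) (P i₁) * det3 (P i₂) (P i₃) (P' i₁) < 0 := by
    have h := hflip
    simp only [detI] at h
    rw [hB', hC'] at h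
    have e1 : det3 (P i₂) (P i₃) (P i₁) = det3 (P i₁) (P i₂) (P i₃) := det3_cyc _ _ _
    have e2 : det3 (P i₂) (P i₃) (P' i₁) = det3 (P' i₁) (P i₂) (P i₃) := det3_cyc _ _ _
    rw [e1, e2]; exact h
  have hs1ne : det3 (P i₂) (P i₃) (P i₁) ≠ 0 := by
    intro h0; rw [h0] at hs; simp at hs
  have hiff1 : 0 < det3 (P i₂) (P i₃) (P' i₁) ↔ det3 (P i₂) (P i₃) (P i₁) < 0 := by
    rcases hs1ne.lt_or_gt with h|h <;> constructor <;> intro h' <;> nlinarith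
  have hiff2 : det3 (P i₂) (P i₃) (P' i₁) < 0 ↔ 0 < det3 (P i₂) (P i₃) (P i₁) := by
    rcases hs1ne.lt_or_gt with h|h <;> constructor <;> intro h' <;> nlinarith
  -- stability of determinant signs during the motion
  have hdd2 : ∀ j, j ≠ i₁ → j ≠ i₂ → j ≠ i₃ →
      0 < det3 (P i₂) (P i₁) (P j) * det3 (P i₂) (P' i₁) (P j) := by
    intro j hj1 hj2 hj3
    have hne : ({i₂, i₁, j} : Finset (Fin n)) ≠ {i₁, i₂, i₃} := by
      intro h
      have h3 : i₃ ∈ ({i₂, i₁, j} : Finset (Fin n)) := by rw [h]; simp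
      simp only [mem_insert, mem_singleton] at h3
      rcases h3 with h'|h'|h'
      exacts [h23 h'.symm, h13 h'.symm, hj3 h'.symm]
    have hdd := hothers i₂ i₁ j h12.symm hj2.symm hj1.symm hne
    simp only [detI] at hdd
    rwa [hB', hfix j hj1] at hdd
  have hdd3 : ∀ j, j ≠ i₁ → j ≠ i₂ → j ≠ i₃ →
      0 < det3 (P i₃) (P i₁) (P j) * det3 (P i₃) (P' i₁) (P j) := by
    intro j hj1 hj2 hj3
    have hne : ({i₃, i₁, j} : Finset (Fin n)) ≠ {i₁, i₂, i₃} := by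
      intro h
      have h3 : i₂ ∈ ({i₃, i₁, j} : Finset (Fin n)) := by rw [h]; simp
      simp only [mem_insert, mem_singleton] at h3
      rcases h3 with h'|h'|h'
      exacts [h23 h', h12 h'.symm, hj2 h'.symm]
    have hdd := hothers i₃ i₁ j h13.symm hj3.symm hj1.symm hne
    simp only [detI] at hdd
    rwa [hC', hfix j hj1] at hdd
  have key2 : ∀ j, j ≠ i₁ → j ≠ i₂ → j ≠ i₃ →
      0 < det3 (P i₂) (P i₁) (P j) * det3 (P i₂) (P i₃) (P j) := by
    intro j hj1 hj2 hj3
    have hdd := hdd2 j hj1 hj2 hj3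
    have e1 : det3 (P i₂) ((1-t) • P i₁ + t • P' i₁) (P j)
        = (1-t) * det3 (P i₂) (P i₁) (P j) + t * det3 (P i₂) (P' i₁) (P j) :=
      det3_affine _ _ _ _ _
    rw [hX, det3_affine, det3_self0, mul_zero, zero_add] at e1
    -- e1 : u * det3 (P i₂) (P i₃) (P j) = (1-t) * d + t * d'
    set d := det3 (P i₂) (P i₁) (P j) with hd
    set d' := det3 (P i₂) (P' i₁) (P j) with hd'
    set e := det3 (P i₂) (P i₃) (P j) with he
    have hdne : d ≠ 0 := by intro h0; rw [h0] at hdd; simp at hdd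
    rcases hdne.lt_or_gt with hneg|hpos
    · have hd'neg : d' < 0 := by nlinarith
      have hene : e < 0 := by nlinarith [hu.1, ht.1, ht.2]
      exact mul_pos_of_neg_of_neg hneg hene
    · have hd'pos : 0 < d' := by nlinarith
      have hepos : 0 < e := by nlinarith [hu.1, ht.1, ht.2]
      exact mul_pos hpos hepos
  have key3 : ∀ j, j ≠ i₁ → j ≠ i₂ → j ≠ i₃ →
      0 < det3 (P i₃) (P i₁) (P j) * det3 (P i₃) (P i₂) (P j) := by
    intro j hj1 hj2 hj3
    have hdd := hdd3 j hj1 hj2 hj3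
    have e1 : det3 (P i₃) ((1-t) • P i₁ + t • P' i₁) (P j)
        = (1-t) * det3 (P i₃) (P i₁) (P j) + t * det3 (P i₃) (P' i₁) (P j) :=
      det3_affine _ _ _ _ _
    rw [hX, det3_affine] at e1
    rw [show det3 (P i₃) (P i₃) (P j) = 0 from det3_self0 _ _, mul_zero, add_zero] at e1
    set d := det3 (P i₃) (P i₁) (P j) with hd
    set d' := det3 (P i₃) (P' i₁) (P j) with hd'
    set e := det3 (P i₃) (P i₂) (P j) with he
    have hdne : d ≠ 0 := by intro h0; rw [h0] at hdd; simp at hdd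
    rcases hdne.lt_or_gt with hneg|hpos
    · have hd'neg : d' < 0 := by nlinarith
      have hene : e < 0 := by nlinarith [hu.2, ht.1, ht.2]
      exact mul_pos_of_neg_of_neg hneg hene
    · have hd'pos : 0 < d' := by nlinarith
      have hepos : 0 < e := by nlinarith [hu.2, ht.1, ht.2]
      exact mul_pos hpos hepos
  have key2' : ∀ j, j ≠ i₁ → j ≠ i₂ → j ≠ i₃ →
      0 < det3 (P i₂) (P' i₁) (P j) * det3 (P i₂) (P i₃) (P j) :=
    fun j h1 h2 h3 => sgn_trans (hdd2 j h1 h2 h3) (key2 j h1 h2 h3)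
  have key3' : ∀ j, j ≠ i₁ → j ≠ i₂ → j ≠ i₃ →
      0 < det3 (P i₃) (P' i₁) (P j) * det3 (P i₃) (P i₂) (P j) :=
    fun j h1 h2 h3 => sgn_trans (hdd3 j h1 h2 h3) (key3 j h1 h2 h3)
  -- the two open half-plane point sets for line (i₂ i₃)
  obtain ⟨sa, hsa_def⟩ : ∃ s : Finset (Fin n), s = (univ : Finset (Fin n)).filter
      (fun l => l ≠ i₁ ∧ l ≠ i₂ ∧ l ≠ i₃ ∧ 0 < det3 (P i₂) (P i₃) (P l)) := ⟨_, rfl⟩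
  obtain ⟨sb, hsb_def⟩ : ∃ s : Finset (Fin n), s = (univ : Finset (Fin n)).filter
      (fun l => l ≠ i₁ ∧ l ≠ i₂ ∧ l ≠ i₃ ∧ det3 (P i₂) (P i₃) (P l) < 0) := ⟨_, rfl⟩
  have hd0 : ∀ l, l ≠ i₁ → l ≠ i₂ → l ≠ i₃ → det3 (P i₂) (P i₃) (P l) ≠ 0 := by
    intro l h1 h2 h3
    have := hgp i₂ i₃ l h23 (Ne.symm h2) (Ne.symm h3)
    simpa [detI] using this
  have hab : sa.card + sb.card = n - 3 := by
    have hdisj : Disjoint sa sb := by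
      rw [disjoint_left]
      intro l hla hlb
      rw [hsa_def, mem_filter] at hla
      rw [hsb_def, mem_filter] at hlb
      linarith [hla.2.2.2.2, hlb.2.2.2.2]
    have hun : sa ∪ sb = univ.filter (fun l => l ≠ i₁ ∧ l ≠ i₂ ∧ l ≠ i₃) := by
      rw [hsa_def, hsb_def]
      ext l
      simp only [mem_union, mem_filter, mem_univ, true_and]
      constructor
      · rintro (⟨ha1,ha2,ha3,_⟩|⟨ha1,ha2,ha3,_⟩) <;> exact ⟨ha1,ha2,ha3⟩
      · rintro ⟨ha1,ha2,ha3⟩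
        rcases (hd0 l ha1 ha2 ha3).lt_or_gt with h|h
        · exact Or.inr ⟨ha1,ha2,ha3,h⟩
        · exact Or.inl ⟨ha1,ha2,ha3,h⟩
    have hcard : (univ.filter (fun l : Fin n => l ≠ i₁ ∧ l ≠ i₂ ∧ l ≠ i₃)).card = n - 3 := by
      have : univ.filter (fun l : Fin n => l ≠ i₁ ∧ l ≠ i₂ ∧ l ≠ i₃)
          = univ \ {i₁, i₂, i₃} := by
        ext l
        simp only [mem_filter, mem_univ, true_and, mem_sdiff, mem_insert, mem_singleton]
        tauto
      rw [this, card_sdiff_of_subset (subset_univ _)]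
      have h3 : ({i₁, i₂, i₃} : Finset (Fin n)).card = 3 := by
        rw [card_insert_of_notMem (by simp [h12, h13]),
          card_insert_of_notMem (by simp [h23]), card_singleton]
      simp [h3]
    rw [← card_union_of_disjoint hdisj, hun, hcard]
  have hka : 0 < det3 (P i₂) (P i₃) (P i₁) → k = sa.card := by
    intro hpos
    rw [hk, hsa_def]
    congr 1
    apply filter_congr
    intro l _
    have : (0 < det3 (P i₂) (P i₃) (P l) * det3 (P i₂) (P i₃) (P i₁))
        ↔ 0 < det3 (P i₂) (P i₃) (P l) := by
      constructor <;> intro h' <;> nlinarith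
    tauto
  have hkb : det3 (P i₂) (P i₃) (P i₁) < 0 → k = sb.card := by
    intro hneg
    rw [hk, hsb_def]
    congr 1
    apply filter_congr
    intro l _
    have : (0 < det3 (P i₂) (P i₃) (P l) * det3 (P i₂) (P i₃) (P i₁))
        ↔ det3 (P i₂) (P i₃) (P l) < 0 := by
      constructor <;> intro h' <;> nlinarith
    tauto
  -- the six side counts before the mutation
  have c23 : sideCountI P i₂ i₃
      = sa.card + (if 0 < det3 (P i₂) (P i₃) (P i₁) then 1 else 0) := by
    have hz : i₁ ∉ sa := by rw [hsa_def]; simp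
    have hmem : ∀ l, l ≠ i₁ → ((0:ℝ) < det3 (P i₂) (P i₃) (P l) ↔ l ∈ sa) := by
      intro l hl
      rw [hsa_def, mem_filter]
      simp only [mem_univ, true_and]
      constructor
      · intro h
        have hl2 : l ≠ i₂ := by rintro rfl; rw [det3_self1] at h; exact lt_irrefl 0 h
        have hl3 : l ≠ i₃ := by rintro rfl; rw [det3_self2] at h; exact lt_irrefl 0 h
        exact ⟨hl, hl2, hl3, h⟩
      · exact fun h => h.2.2.2
    simp only [sideCountI]
    rw [count_aux _ sa i₁ hz hmem]
  have c32 : sideCountI P i₃ i₂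
      = sb.card + (if det3 (P i₂) (P i₃) (P i₁) < 0 then 1 else 0) := by
    have hz : i₁ ∉ sb := by rw [hsb_def]; simp
    have hmem : ∀ l, l ≠ i₁ → ((0:ℝ) < det3 (P i₃) (P i₂) (P l) ↔ l ∈ sb) := by
      intro l hl
      rw [hsb_def, mem_filter]
      simp only [mem_univ, true_and]
      rw [det3_swap1 (P i₂) (P i₃) (P l), neg_pos]
      constructor
      · intro h
        have hl2 : l ≠ i₂ := by rintro rfl; rw [det3_self1] at h; exact lt_irrefl 0 h
        have hl3 : l ≠ i₃ := by rintro rfl; rw [det3_self2] at h; exact lt_irrefl 0 h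
        exact ⟨hl, hl2, hl3, h⟩
      · exact fun h => h.2.2.2
    simp only [sideCountI]
    rw [count_aux _ sb i₁ hz hmem]
    congr 1
    refine if_congr ?_ rfl rfl
    rw [det3_swap1 (P i₂) (P i₃) (P i₁)]
    exact neg_pos
  have c21 : sideCountI P i₂ i₁
      = sa.card + (if det3 (P i₂) (P i₃) (P i₁) < 0 then 1 else 0) := by
    have hz : i₃ ∉ sa := by rw [hsa_def]; simp
    have hmem : ∀ l, l ≠ i₃ → ((0:ℝ) < det3 (P i₂) (P i₁) (P l) ↔ l ∈ sa) := by
      intro l hl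
      rw [hsa_def, mem_filter]
      simp only [mem_univ, true_and]
      constructor
      · intro h
        have hl1 : l ≠ i₁ := by rintro rfl; rw [det3_self2] at h; exact lt_irrefl 0 h
        have hl2 : l ≠ i₂ := by rintro rfl; rw [det3_self1] at h; exact lt_irrefl 0 h
        exact ⟨hl1, hl2, hl, (pos_iff_of_mul_pos (key2 l hl1 hl2 hl)).mp h⟩
      · rintro ⟨hl1, hl2, hl3, h4⟩
        exact (pos_iff_of_mul_pos (key2 l hl1 hl2 hl3)).mpr h4
    simp only [sideCountI]
    rw [count_aux _ sa i₃ hz hmem]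
    congr 1
    refine if_congr ?_ rfl rfl
    rw [det3_swap (P i₂) (P i₃) (P i₁)]
    exact neg_pos
  have c12 : sideCountI P i₁ i₂
      = sb.card + (if 0 < det3 (P i₂) (P i₃) (P i₁) then 1 else 0) := by
    have hz : i₃ ∉ sb := by rw [hsb_def]; simp
    have hmem : ∀ l, l ≠ i₃ → ((0:ℝ) < det3 (P i₁) (P i₂) (P l) ↔ l ∈ sb) := by
      intro l hl
      rw [hsb_def, mem_filter]
      simp only [mem_univ, true_and]
      rw [det3_swap1 (P i₂) (P i₁) (P l), neg_pos]
      constructor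
      · intro h
        have hl1 : l ≠ i₁ := by rintro rfl; rw [det3_self2] at h; exact lt_irrefl 0 h
        have hl2 : l ≠ i₂ := by rintro rfl; rw [det3_self1] at h; exact lt_irrefl 0 h
        exact ⟨hl1, hl2, hl, (neg_iff_of_mul_pos (key2 l hl1 hl2 hl)).mp h⟩
      · rintro ⟨hl1, hl2, hl3, h4⟩
        exact (neg_iff_of_mul_pos (key2 l hl1 hl2 hl3)).mpr h4
    simp only [sideCountI]
    rw [count_aux _ sb i₃ hz hmem]
    congr 1
    refine if_congr ?_ rfl rfl
    rw [show det3 (P i₁) (P i₂) (P i₃) = det3 (P i₂) (P i₃) (P i₁) from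
      (det3_cyc (P i₁) (P i₂) (P i₃)).symm]
  have c31 : sideCountI P i₃ i₁
      = sb.card + (if 0 < det3 (P i₂) (P i₃) (P i₁) then 1 else 0) := by
    have hz : i₂ ∉ sb := by rw [hsb_def]; simp
    have hmem : ∀ l, l ≠ i₂ → ((0:ℝ) < det3 (P i₃) (P i₁) (P l) ↔ l ∈ sb) := by
      intro l hl
      rw [hsb_def, mem_filter]
      simp only [mem_univ, true_and]
      constructor
      · intro h
        have hl1 : l ≠ i₁ := by rintro rfl; rw [det3_self2] at h; exact lt_irrefl 0 h
        have hl3 : l ≠ i₃ := by rintro rfl; rw [det3_self1] at h; exact lt_irrefl 0 h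
        refine ⟨hl1, hl, hl3, ?_⟩
        have h5 := (pos_iff_of_mul_pos (key3 l hl1 hl hl3)).mp h
        rw [det3_swap1 (P i₂) (P i₃) (P l), neg_pos] at h5
        exact h5
      · rintro ⟨hl1, hl2, hl3, h4⟩
        refine (pos_iff_of_mul_pos (key3 l hl1 hl2 hl3)).mpr ?_
        rw [det3_swap1 (P i₂) (P i₃) (P l), neg_pos]
        exact h4
    simp only [sideCountI]
    rw [count_aux _ sb i₂ hz hmem]
    congr 1
    refine if_congr ?_ rfl rfl
    rw [det3_cyc (P i₂) (P i₃) (P i₁)]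
  have c13 : sideCountI P i₁ i₃
      = sa.card + (if det3 (P i₂) (P i₃) (P i₁) < 0 then 1 else 0) := by
    have hz : i₂ ∉ sa := by rw [hsa_def]; simp
    have hmem : ∀ l, l ≠ i₂ → ((0:ℝ) < det3 (P i₁) (P i₃) (P l) ↔ l ∈ sa) := by
      intro l hl
      rw [hsa_def, mem_filter]
      simp only [mem_univ, true_and]
      rw [det3_swap1 (P i₃) (P i₁) (P l), neg_pos]
      constructor
      · intro h
        have hl1 : l ≠ i₁ := by rintro rfl; rw [det3_self2] at h; exact lt_irrefl 0 h
        have hl3 : l ≠ i₃ := by rintro rfl; rw [det3_self1] at h; exact lt_irrefl 0 h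
        refine ⟨hl1, hl, hl3, ?_⟩
        have h5 := (neg_iff_of_mul_pos (key3 l hl1 hl hl3)).mp h
        rw [det3_swap1 (P i₂) (P i₃) (P l)] at h5
        linarith
      · rintro ⟨hl1, hl2, hl3, h4⟩
        refine (neg_iff_of_mul_pos (key3 l hl1 hl2 hl3)).mpr ?_
        rw [det3_swap1 (P i₂) (P i₃) (P l)]
        linarith
    simp only [sideCountI]
    rw [count_aux _ sa i₂ hz hmem]
    congr 1
    refine if_congr ?_ rfl rfl
    rw [det3_swap (P i₁) (P i₂) (P i₃), neg_pos,
      show det3 (P i₁) (P i₂) (P i₃) = det3 (P i₂) (P i₃) (P i₁) from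
        (det3_cyc (P i₁) (P i₂) (P i₃)).symm]
  -- the six side counts after the mutation
  have c23' : sideCountI P' i₂ i₃
      = sa.card + (if det3 (P i₂) (P i₃) (P i₁) < 0 then 1 else 0) := by
    have hz : i₁ ∉ sa := by rw [hsa_def]; simp
    have hmem : ∀ l, l ≠ i₁ → ((0:ℝ) < det3 (P i₂) (P i₃) (P' l) ↔ l ∈ sa) := by
      intro l hl
      rw [hfix l hl, hsa_def, mem_filter]
      simp only [mem_univ, true_and]
      constructor
      · intro h
        have hl2 : l ≠ i₂ := by rintro rfl; rw [det3_self1] at h; exact lt_irrefl 0 h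
        have hl3 : l ≠ i₃ := by rintro rfl; rw [det3_self2] at h; exact lt_irrefl 0 h
        exact ⟨hl, hl2, hl3, h⟩
      · exact fun h => h.2.2.2
    simp only [sideCountI, hB', hC']
    rw [count_aux _ sa i₁ hz hmem]
    congr 1
    exact if_congr hiff1 rfl rfl
  have c32' : sideCountI P' i₃ i₂
      = sb.card + (if 0 < det3 (P i₂) (P i₃) (P i₁) then 1 else 0) := by
    have hz : i₁ ∉ sb := by rw [hsb_def]; simp
    have hmem : ∀ l, l ≠ i₁ → ((0:ℝ) < det3 (P i₃) (P i₂) (P' l) ↔ l ∈ sb) := by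
      intro l hl
      rw [hfix l hl, hsb_def, mem_filter]
      simp only [mem_univ, true_and]
      rw [det3_swap1 (P i₂) (P i₃) (P l), neg_pos]
      constructor
      · intro h
        have hl2 : l ≠ i₂ := by rintro rfl; rw [det3_self1] at h; exact lt_irrefl 0 h
        have hl3 : l ≠ i₃ := by rintro rfl; rw [det3_self2] at h; exact lt_irrefl 0 h
        exact ⟨hl, hl2, hl3, h⟩
      · exact fun h => h.2.2.2
    simp only [sideCountI, hB', hC']
    rw [count_aux _ sb i₁ hz hmem]
    congr 1
    refine if_congr ?_ rfl rfl
    rw [det3_swap1 (P i₂) (P i₃) (P' i₁), neg_pos]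
    exact hiff2
  have c21' : sideCountI P' i₂ i₁
      = sa.card + (if 0 < det3 (P i₂) (P i₃) (P i₁) then 1 else 0) := by
    have hz : i₃ ∉ sa := by rw [hsa_def]; simp
    have hmem : ∀ l, l ≠ i₃ → ((0:ℝ) < det3 (P i₂) (P' i₁) (P' l) ↔ l ∈ sa) := by
      intro l hl
      rw [hsa_def, mem_filter]
      simp only [mem_univ, true_and]
      constructor
      · intro h
        have hl1 : l ≠ i₁ := by rintro rfl; rw [det3_self2] at h; exact lt_irrefl 0 h
        have hl2 : l ≠ i₂ := by
          rintro rfl; rw [hB', det3_self1] at h; exact lt_irrefl 0 h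
        rw [hfix l hl1] at h
        exact ⟨hl1, hl2, hl, (pos_iff_of_mul_pos (key2' l hl1 hl2 hl)).mp h⟩
      · rintro ⟨hl1, hl2, hl3, h4⟩
        rw [hfix l hl1]
        exact (pos_iff_of_mul_pos (key2' l hl1 hl2 hl3)).mpr h4
    simp only [sideCountI, hB', hC']
    rw [count_aux _ sa i₃ hz hmem]
    congr 1
    refine if_congr ?_ rfl rfl
    rw [hC', det3_swap (P i₂) (P i₃) (P' i₁), neg_pos]
    exact hiff2
  have c12' : sideCountI P' i₁ i₂
      = sb.card + (if det3 (P i₂) (P i₃) (P i₁) < 0 then 1 else 0) := by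
    have hz : i₃ ∉ sb := by rw [hsb_def]; simp
    have hmem : ∀ l, l ≠ i₃ → ((0:ℝ) < det3 (P' i₁) (P i₂) (P' l) ↔ l ∈ sb) := by
      intro l hl
      rw [hsb_def, mem_filter]
      simp only [mem_univ, true_and]
      rw [det3_swap1 (P i₂) (P' i₁) (P' l), neg_pos]
      constructor
      · intro h
        have hl1 : l ≠ i₁ := by rintro rfl; rw [det3_self2] at h; exact lt_irrefl 0 h
        have hl2 : l ≠ i₂ := by
          rintro rfl; rw [hB', det3_self1] at h; exact lt_irrefl 0 h
        rw [hfix l hl1] at h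
        exact ⟨hl1, hl2, hl, (neg_iff_of_mul_pos (key2' l hl1 hl2 hl)).mp h⟩
      · rintro ⟨hl1, hl2, hl3, h4⟩
        rw [hfix l hl1]
        exact (neg_iff_of_mul_pos (key2' l hl1 hl2 hl3)).mpr h4
    simp only [sideCountI, hB', hC']
    rw [count_aux _ sb i₃ hz hmem]
    congr 1
    refine if_congr ?_ rfl rfl
    rw [hC', show det3 (P' i₁) (P i₂) (P i₃) = det3 (P i₂) (P i₃) (P' i₁) from
      (det3_cyc (P' i₁) (P i₂) (P i₃)).symm]
    exact hiff1
  have c31' : sideCountI P' i₃ i₁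
      = sb.card + (if det3 (P i₂) (P i₃) (P i₁) < 0 then 1 else 0) := by
    have hz : i₂ ∉ sb := by rw [hsb_def]; simp
    have hmem : ∀ l, l ≠ i₂ → ((0:ℝ) < det3 (P i₃) (P' i₁) (P' l) ↔ l ∈ sb) := by
      intro l hl
      rw [hsb_def, mem_filter]
      simp only [mem_univ, true_and]
      constructor
      · intro h
        have hl1 : l ≠ i₁ := by rintro rfl; rw [det3_self2] at h; exact lt_irrefl 0 h
        have hl3 : l ≠ i₃ := by
          rintro rfl; rw [hC', det3_self1] at h; exact lt_irrefl 0 h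
        rw [hfix l hl1] at h
        refine ⟨hl1, hl, hl3, ?_⟩
        have h5 := (pos_iff_of_mul_pos (key3' l hl1 hl hl3)).mp h
        rw [det3_swap1 (P i₂) (P i₃) (P l), neg_pos] at h5
        exact h5
      · rintro ⟨hl1, hl2, hl3, h4⟩
        rw [hfix l hl1]
        refine (pos_iff_of_mul_pos (key3' l hl1 hl2 hl3)).mpr ?_
        rw [det3_swap1 (P i₂) (P i₃) (P l), neg_pos]
        exact h4
    simp only [sideCountI, hB', hC']
    rw [count_aux _ sb i₂ hz hmem]
    congr 1
    refine if_congr ?_ rfl rfl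
    rw [hB', show det3 (P i₃) (P' i₁) (P i₂) = det3 (P i₂) (P i₃) (P' i₁) from
      det3_cyc (P i₂) (P i₃) (P' i₁)]
    exact hiff1
  have c13' : sideCountI P' i₁ i₃
      = sa.card + (if 0 < det3 (P i₂) (P i₃) (P i₁) then 1 else 0) := by
    have hz : i₂ ∉ sa := by rw [hsa_def]; simp
    have hmem : ∀ l, l ≠ i₂ → ((0:ℝ) < det3 (P' i₁) (P i₃) (P' l) ↔ l ∈ sa) := by
      intro l hl
      rw [hsa_def, mem_filter]
      simp only [mem_univ, true_and]
      rw [det3_swap1 (P i₃) (P' i₁) (P' l), neg_pos]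
      constructor
      · intro h
        have hl1 : l ≠ i₁ := by rintro rfl; rw [det3_self2] at h; exact lt_irrefl 0 h
        have hl3 : l ≠ i₃ := by
          rintro rfl; rw [hC', det3_self1] at h; exact lt_irrefl 0 h
        rw [hfix l hl1] at h
        refine ⟨hl1, hl, hl3, ?_⟩
        have h5 := (neg_iff_of_mul_pos (key3' l hl1 hl hl3)).mp h
        rw [det3_swap1 (P i₂) (P i₃) (P l)] at h5
        linarith
      · rintro ⟨hl1, hl2, hl3, h4⟩
        rw [hfix l hl1]
        refine (neg_iff_of_mul_pos (key3' l hl1 hl2 hl3)).mpr ?_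
        rw [det3_swap1 (P i₂) (P i₃) (P l)]
        linarith
    simp only [sideCountI, hB', hC']
    rw [count_aux _ sa i₂ hz hmem]
    congr 1
    refine if_congr ?_ rfl rfl
    rw [hB', det3_swap (P' i₁) (P i₂) (P i₃), neg_pos,
      show det3 (P' i₁) (P i₂) (P i₃) = det3 (P i₂) (P i₃) (P' i₁) from
        (det3_cyc (P' i₁) (P i₂) (P i₃)).symm]
    exact hiff2
  -- unordered characterizations of the side counts of the three special pairs
  have F1 : ∀ m : ℕ, (sideCountI P i₁ i₂ = m ∨ sideCountI P i₂ i₁ = m)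
      ↔ (m = k ∨ m = n - 2 - k) := by
    intro m
    rw [c12, c21]
    rcases hs1ne.lt_or_gt with hσ|hσ
    · have hno : ¬ (0 < det3 (P i₂) (P i₃) (P i₁)) := by linarith
      rw [if_neg hno, if_pos hσ]
      exact (pairvals hn3 ((add_comm sa.card sb.card) ▸ hab) (hkb hσ)).2.2.2
    · have hno : ¬ (det3 (P i₂) (P i₃) (P i₁) < 0) := by linarith
      rw [if_pos hσ, if_neg hno]
      exact (pairvals hn3 hab (hka hσ)).2.2.1
  have F2 : ∀ m : ℕ, (sideCountI P i₁ i₃ = m ∨ sideCountI P i₃ i₁ = m)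
      ↔ (m = k ∨ m = n - 2 - k) := by
    intro m
    rw [c13, c31]
    rcases hs1ne.lt_or_gt with hσ|hσ
    · have hno : ¬ (0 < det3 (P i₂) (P i₃) (P i₁)) := by linarith
      rw [if_pos hσ, if_neg hno]
      exact (pairvals hn3 ((add_comm sa.card sb.card) ▸ hab) (hkb hσ)).2.2.1
    · have hno : ¬ (det3 (P i₂) (P i₃) (P i₁) < 0) := by linarith
      rw [if_neg hno, if_pos hσ]
      exact (pairvals hn3 hab (hka hσ)).2.2.2
  have F3 : ∀ m : ℕ, (sideCountI P i₂ i₃ = m ∨ sideCountI P i₃ i₂ = m)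
      ↔ (m = k + 1 ∨ m = n - 3 - k) := by
    intro m
    rw [c23, c32]
    rcases hs1ne.lt_or_gt with hσ|hσ
    · have hno : ¬ (0 < det3 (P i₂) (P i₃) (P i₁)) := by linarith
      rw [if_neg hno, if_pos hσ]
      exact (pairvals hn3 ((add_comm sa.card sb.card) ▸ hab) (hkb hσ)).2.1
    · have hno : ¬ (det3 (P i₂) (P i₃) (P i₁) < 0) := by linarith
      rw [if_pos hσ, if_neg hno]
      exact (pairvals hn3 hab (hka hσ)).1
  have F1' : ∀ m : ℕ, (sideCountI P' i₁ i₂ = m ∨ sideCountI P' i₂ i₁ = m)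
      ↔ (m = k + 1 ∨ m = n - 3 - k) := by
    intro m
    rw [c12', c21']
    rcases hs1ne.lt_or_gt with hσ|hσ
    · have hno : ¬ (0 < det3 (P i₂) (P i₃) (P i₁)) := by linarith
      rw [if_pos hσ, if_neg hno]
      exact (pairvals hn3 ((add_comm sa.card sb.card) ▸ hab) (hkb hσ)).1
    · have hno : ¬ (det3 (P i₂) (P i₃) (P i₁) < 0) := by linarith
      rw [if_neg hno, if_pos hσ]
      exact (pairvals hn3 hab (hka hσ)).2.1
  have F2' : ∀ m : ℕ, (sideCountI P' i₁ i₃ = m ∨ sideCountI P' i₃ i₁ = m)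
      ↔ (m = k + 1 ∨ m = n - 3 - k) := by
    intro m
    rw [c13', c31']
    rcases hs1ne.lt_or_gt with hσ|hσ
    · have hno : ¬ (0 < det3 (P i₂) (P i₃) (P i₁)) := by linarith
      rw [if_neg hno, if_pos hσ]
      exact (pairvals hn3 ((add_comm sa.card sb.card) ▸ hab) (hkb hσ)).2.1
    · have hno : ¬ (det3 (P i₂) (P i₃) (P i₁) < 0) := by linarith
      rw [if_pos hσ, if_neg hno]
      exact (pairvals hn3 hab (hka hσ)).1
  have F3' : ∀ m : ℕ, (sideCountI P' i₂ i₃ = m ∨ sideCountI P' i₃ i₂ = m)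
      ↔ (m = k ∨ m = n - 2 - k) := by
    intro m
    rw [c23', c32']
    rcases hs1ne.lt_or_gt with hσ|hσ
    · have hno : ¬ (0 < det3 (P i₂) (P i₃) (P i₁)) := by linarith
      rw [if_pos hσ, if_neg hno]
      exact (pairvals hn3 ((add_comm sa.card sb.card) ▸ hab) (hkb hσ)).2.2.1
    · have hno : ¬ (det3 (P i₂) (P i₃) (P i₁) < 0) := by linarith
      rw [if_neg hno, if_pos hσ]
      exact (pairvals hn3 hab (hka hσ)).2.2.2
  -- the three special edges
  obtain ⟨T, hT_def⟩ : ∃ T : Finset (Finset (Fin n)),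
      T = {{i₁,i₂}, {i₁,i₃}, {i₂,i₃}} := ⟨_, rfl⟩
  have hE12 : ({i₁,i₂} : Finset (Fin n)) ≠ {i₁,i₃} := by
    intro h
    have h2 : i₂ ∈ ({i₁,i₃} : Finset (Fin n)) := h ▸ (by simp)
    simp only [mem_insert, mem_singleton] at h2
    rcases h2 with h'|h'
    exacts [h12 h'.symm, h23 h']
  have hE13 : ({i₁,i₂} : Finset (Fin n)) ≠ {i₂,i₃} := by
    intro h
    have h2 : i₁ ∈ ({i₂,i₃} : Finset (Fin n)) := h ▸ (by simp)
    simp only [mem_insert, mem_singleton] at h2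
    rcases h2 with h'|h'
    exacts [h12 h', h13 h']
  have hE23 : ({i₁,i₃} : Finset (Fin n)) ≠ {i₂,i₃} := by
    intro h
    have h2 : i₁ ∈ ({i₂,i₃} : Finset (Fin n)) := h ▸ (by simp)
    simp only [mem_insert, mem_singleton] at h2
    rcases h2 with h'|h'
    exacts [h12 h', h13 h']
  have hTsub : T ⊆ (univ : Finset (Fin n)).powersetCard 2 := by
    intro e he
    rw [hT_def] at he
    simp only [mem_insert, mem_singleton] at he
    rw [mem_powersetCard]
    rcases he with rfl|rfl|rfl
    exacts [⟨subset_univ _, card_pair h12⟩, ⟨subset_univ _, card_pair h13⟩,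
      ⟨subset_univ _, card_pair h23⟩]
  have hsc_eq : ∀ x y : Fin n, x ≠ y → ({x,y} : Finset (Fin n)) ∉ T →
      sideCountI P' x y = sideCountI P x y := by
    intro x y hxy hnT
    simp only [sideCountI]
    congr 1
    apply filter_congr
    intro l _
    rcases eq_or_ne l x with rfl|hlx
    · simp [det3_self1]
    rcases eq_or_ne l y with rfl|hly
    · simp [det3_self2]
    by_cases hxyz : ({x,y,l} : Finset (Fin n)) = {i₁,i₂,i₃}
    · exfalso
      apply hnT
      have hx : x = i₁ ∨ x = i₂ ∨ x = i₃ := by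
        have hx' : x ∈ ({x,y,l} : Finset (Fin n)) := by simp
        rw [hxyz] at hx'; simpa using hx'
      have hy : y = i₁ ∨ y = i₂ ∨ y = i₃ := by
        have hy' : y ∈ ({x,y,l} : Finset (Fin n)) := by simp
        rw [hxyz] at hy'; simpa using hy'
      rw [hT_def]
      simp only [mem_insert, mem_singleton]
      rcases hx with rfl|rfl|rfl <;> rcases hy with rfl|rfl|rfl <;>
        first
          | exact absurd rfl hxy
          | exact Or.inl rfl
          | exact Or.inl (Finset.pair_comm _ _)
          | exact Or.inr (Or.inl rfl)
          | exact Or.inr (Or.inl (Finset.pair_comm _ _))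
          | exact Or.inr (Or.inr rfl)
          | exact Or.inr (Or.inr (Finset.pair_comm _ _))
    · have h1 := hothers x y l hxy hlx.symm hly.symm hxyz
      simp only [detI] at h1
      exact (pos_iff_of_mul_pos h1).symm
  have houtside : ∀ m : ℕ,
      ((((univ : Finset (Fin n)).powersetCard 2) \ T).filter
        (fun e => ∃ a b : Fin n, e = {a,b} ∧ a ≠ b ∧
          (sideCountI P' a b = m ∨ sideCountI P' b a = m))).card
      = ((((univ : Finset (Fin n)).powersetCard 2) \ T).filter
        (fun e => ∃ a b : Fin n, e = {a,b} ∧ a ≠ b ∧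
          (sideCountI P a b = m ∨ sideCountI P b a = m))).card := by
    intro m
    congr 1
    apply filter_congr
    intro e he
    rw [mem_sdiff] at he
    constructor
    · rintro ⟨a, b, rfl, hab', h⟩
      rw [hsc_eq a b hab' he.2,
        hsc_eq b a hab'.symm (by rw [Finset.pair_comm b a]; exact he.2)] at h
      exact ⟨a, b, rfl, hab', h⟩
    · rintro ⟨a, b, rfl, hab', h⟩
      refine ⟨a, b, rfl, hab', ?_⟩
      rw [hsc_eq a b hab' he.2,
        hsc_eq b a hab'.symm (by rw [Finset.pair_comm b a]; exact he.2)]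
      exact h
  have hTfilter : ∀ m : ℕ,
      (T.filter (fun e => ∃ a b : Fin n, e = {a,b} ∧ a ≠ b ∧
          (sideCountI P a b = m ∨ sideCountI P b a = m))).card
        = (if m = k ∨ m = n - 2 - k then 2 else 0)
          + (if m = k + 1 ∨ m = n - 3 - k then 1 else 0) := by
    intro m
    rw [hT_def, card_filter,
      sum_insert (by simp [hE12, hE13]), sum_insert (by simp [hE23]), sum_singleton]
    rw [if_congr ((pred_pair_iff P m i₁ i₂ h12).trans (F1 m)) rfl rfl,
      if_congr ((pred_pair_iff P m i₁ i₃ h13).trans (F2 m)) rfl rfl,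
      if_congr ((pred_pair_iff P m i₂ i₃ h23).trans (F3 m)) rfl rfl]
    exact ite_arith1 _ _
  have hTfilter' : ∀ m : ℕ,
      (T.filter (fun e => ∃ a b : Fin n, e = {a,b} ∧ a ≠ b ∧
          (sideCountI P' a b = m ∨ sideCountI P' b a = m))).card
        = (if m = k ∨ m = n - 2 - k then 1 else 0)
          + (if m = k + 1 ∨ m = n - 3 - k then 2 else 0) := by
    intro m
    rw [hT_def, card_filter,
      sum_insert (by simp [hE12, hE13]), sum_insert (by simp [hE23]), sum_singleton]
    rw [if_congr ((pred_pair_iff P' m i₁ i₂ h12).trans (F1' m)) rfl rfl,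
      if_congr ((pred_pair_iff P' m i₁ i₃ h13).trans (F2' m)) rfl rfl,
      if_congr ((pred_pair_iff P' m i₂ i₃ h23).trans (F3' m)) rfl rfl]
    exact ite_arith2 _ _
  have hejP : ∀ m' : ℕ, ejI P m'
      = (((univ : Finset (Fin n)).powersetCard 2).filter
          (fun e => ∃ a b : Fin n, e = {a,b} ∧ a ≠ b ∧
            (sideCountI P a b = m' ∨ sideCountI P b a = m'))).card := fun _ => rfl
  have hejP' : ∀ m' : ℕ, ejI P' m'
      = (((univ : Finset (Fin n)).powersetCard 2).filter
          (fun e => ∃ a b : Fin n, e = {a,b} ∧ a ≠ b ∧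
            (sideCountI P' a b = m' ∨ sideCountI P' b a = m'))).card := fun _ => rfl
  have keyq : ∀ m : ℕ,
      ejI P m + ((if m = k ∨ m = n - 2 - k then 1 else 0)
          + (if m = k + 1 ∨ m = n - 3 - k then 2 else 0))
      = ejI P' m + ((if m = k ∨ m = n - 2 - k then 2 else 0)
          + (if m = k + 1 ∨ m = n - 3 - k then 1 else 0)) := by
    intro m
    rw [hejP m, hejP' m, ← sdiff_union_of_subset hTsub, filter_union, filter_union,
      card_union_of_disjoint (disjoint_filter_filter sdiff_disjoint),
      card_union_of_disjoint (disjoint_filter_filter sdiff_disjoint),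
      houtside m, hTfilter m, hTfilter' m]
    ring
  exact final_arith n k (ejI P) (ejI P') hn3 hkle keyq
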